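/- The element q = Σ_{a≠b, b∉{a+1,a-1}} x_a x_b − Σ_{k∈Z/5Z} x_k^2 of S^2(V) (with V = Q^5, basis x_0,...,x_4) pairs to zero with every element of I_2 under the standard pairing; equivalently, under the quotient map S^2(V) → S^2(V)/I_2 ≅ Q, the functional vanishing on I_2 is (up to scalar) determined by q. -/

import Mathlib

open MvPolynomial

/-- The quadratic Keel relations for `M̄_{0,5}` in the side variables `x_i`, `i ∈ ℤ/5ℤ`. -/
noncomputable def keelRels5 : Set (MvPolynomial (ZMod 5) ℚ) :=
  {p | ∃ i : ZMod 5, p = X i * X (i + 1)} ∪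
  {p | ∃ i k : ZMod 5, (k = i ∨ k = i - 1 ∨ k = i + 2 ∨ k = i + 3) ∧
      p = (X i + X (i + 2) - X (i + 1)) * X k}


/-- The standard monomial pairing on polynomials (dual basis of monomials):
`⟨p, q⟩ = Σ_m coeff_m(p) · coeff_m(q)`. -/
noncomputable def monPair (p q : MvPolynomial (ZMod 5) ℚ) : ℚ :=
  ∑ m ∈ p.support, MvPolynomial.coeff m p * MvPolynomial.coeff m q

/-- The element `q = Σ_{nonadjacent pairs {a,b}} x_a x_b − Σ_k x_k²` of `S²(V)`;
the nonadjacent unordered pairs mod 5 are exactly `{a, a+2}` for `a ∈ ℤ/5ℤ`. -/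
noncomputable def qElt : MvPolynomial (ZMod 5) ℚ :=
  (∑ a : ZMod 5, X a * X (a + 2)) - ∑ k : ZMod 5, X k ^ 2

/-! Pairing `q` with a quadratic monomial `x_a x_b` reads off the coefficient of `x_a x_b` in `q`,
which is `-1` on the diagonal, `1` on non-adjacent pairs `{a, a + 2}` and `0` on adjacent pairs.
Hence `q*` kills every `x_i x_{i+1}`, and on `(x_i + x_{i+2} - x_{i+1}) x_k` it gives an alternating
sum of three such coefficients, which vanishes for the four admissible `k` by a check over `ℤ/5ℤ`. -/

open Finsupp

section

variable {σ R : Type*} [CommSemiring R]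

theorem single_one_add_single_one_eq_iff {a b c d : σ} :
    single a 1 + single b 1 = single c 1 + single d 1 ↔ (a = c ∧ b = d) ∨ (a = d ∧ b = c) := by
  rw [Finsupp.single_add_single_eq_single_add_single one_ne_zero one_ne_zero]
  simp

theorem X_mul_X_eq_monomial (a b : σ) :
    (X a * X b : MvPolynomial σ R) = monomial (single a 1 + single b 1) 1 := by
  rw [X, X, monomial_mul, one_mul]

theorem coeff_single_add_single_X_mul_X [DecidableEq σ] (a b c d : σ) :
    coeff (single c 1 + single d 1) (X a * X b : MvPolynomial σ R) =
      if (a = c ∧ b = d) ∨ (a = d ∧ b = c) then 1 else 0 := by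
  rw [X_mul_X_eq_monomial, coeff_monomial]
  exact if_congr single_one_add_single_one_eq_iff rfl rfl

end

noncomputable def monPairₗ (p : MvPolynomial (ZMod 5) ℚ) : MvPolynomial (ZMod 5) ℚ →ₗ[ℚ] ℚ where
  toFun := monPair p
  map_add' q r := by simp only [monPair, coeff_add, mul_add, Finset.sum_add_distrib]
  map_smul' c q := by
    simp only [monPair, coeff_smul, smul_eq_mul, RingHom.id_apply, Finset.mul_sum, mul_left_comm]

theorem monPairₗ_monomial_one (p : MvPolynomial (ZMod 5) ℚ) (n : ZMod 5 →₀ ℕ) :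
    monPairₗ p (monomial n 1) = coeff n p := by
  show ∑ m ∈ p.support, coeff m p * coeff m (monomial n 1) = coeff n p
  rw [Finset.sum_eq_single n (fun m _ hmn => by simp [coeff_monomial, Ne.symm hmn])
    (fun hn => by simp [MvPolynomial.notMem_support_iff.mp hn]), coeff_monomial, if_pos rfl,
    mul_one]

theorem monPairₗ_X_mul_X (p : MvPolynomial (ZMod 5) ℚ) (a b : ZMod 5) :
    monPairₗ p (X a * X b) = coeff (single a 1 + single b 1) p := by
  rw [X_mul_X_eq_monomial, monPairₗ_monomial_one]

-- Integer-valued so that the finite checks over `ZMod 5` below go through `decide`.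
def qCoeff (c d : ZMod 5) : ℤ :=
  if c = d then -1 else if d = c + 2 ∨ c = d + 2 then 1 else 0

theorem coeff_qElt (c d : ZMod 5) :
    coeff (single c 1 + single d 1) qElt = qCoeff c d := by
  simp only [qElt, coeff_sub, coeff_sum, sq, coeff_single_add_single_X_mul_X, Finset.sum_boole]
  norm_cast
  revert c d
  decide

theorem qCoeff_adjacent (i : ZMod 5) : qCoeff i (i + 1) = 0 := by
  revert i; decide

theorem qCoeff_keelRel (i k : ZMod 5) (hk : k = i ∨ k = i - 1 ∨ k = i + 2 ∨ k = i + 3) :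
    qCoeff i k + qCoeff (i + 2) k - qCoeff (i + 1) k = 0 := by
  revert i k; decide

/-- `q` pairs to zero with every element of `I₂` under the standard
monomial pairing, i.e. the dual functional `q*` annihilates `I₂`. -/
theorem stmt7 :
    ∀ r ∈ Submodule.span ℚ keelRels5, monPair qElt r = 0 := by
  intro r hr
  suffices keelRels5 ⊆ LinearMap.ker (monPairₗ qElt) from Submodule.span_le.mpr this hr
  rintro _ (⟨i, rfl⟩ | ⟨i, k, hk, rfl⟩) <;> rw [SetLike.mem_coe, LinearMap.mem_ker]
  · rw [monPairₗ_X_mul_X, coeff_qElt, qCoeff_adjacent, Int.cast_zero]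
  · rw [sub_mul, add_mul, map_sub, map_add, monPairₗ_X_mul_X, monPairₗ_X_mul_X,
      monPairₗ_X_mul_X, coeff_qElt, coeff_qElt, coeff_qElt]
    exact_mod_cast qCoeff_keelRel i k hk
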